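/- Let φ : ℝ^N → ℝ be measurable and write φ⁺(x) := max(φ(x), 0) and φ⁻(x) := max(−φ(x), 0). Assume that the function (x,y) ↦ (φ(x) − φ(y))(φ⁻(x) − φ⁻(y))/|x − y|^{N+2s} is Lebesgue integrable on ℝ^N × ℝ^N and that F(φ⁻, φ⁻) < ∞. Then −F(φ, φ⁻) ≥ F(φ⁻, φ⁻) ≥ 0. -/

import Mathlib

/-! The map `t ↦ max t 0` is monotone and `1`-Lipschitz, so its increment `f c - f d` has the
sign of `c - d` and is no larger in absolute value; hence `(f c - f d)² ≤ (c - d)(f c - f d)`.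
With `c = -φ x`, `d = -φ y` this bounds the integrand of `F(φ⁻, φ⁻)` by that of
`F(-φ, φ⁻) = -F(φ, φ⁻)`, and the constant `C_{N,s}` is positive. -/

open MeasureTheory Real Set

noncomputable section

/-- Euclidean space `ℝ^N`. -/
abbrev E (N : ℕ) := EuclideanSpace ℝ (Fin N)

/-- The normalization constant `C_{N,s} = s·2^{2s}·Γ((N+2s)/2)/(π^{N/2}·Γ(1−s))`. -/
def CNs (N : ℕ) (s : ℝ) : ℝ :=
  s * (2 : ℝ) ^ (2 * s) * Real.Gamma (((N : ℝ) + 2 * s) / 2) /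
    (Real.pi ^ ((N : ℝ) / 2) * Real.Gamma (1 - s))

/-- The Gagliardo kernel integrand `(u(x)−u(y))(v(x)−v(y))/|x−y|^{N+2s}`. -/
def kern (N : ℕ) (s : ℝ) (u v : E N → ℝ) (p : E N × E N) : ℝ :=
  (u p.1 - u p.2) * (v p.1 - v p.2) / ‖p.1 - p.2‖ ^ ((N : ℝ) + 2 * s)

/-- The full bilinear form `F(u,v)` over `ℝ^N × ℝ^N`. -/
def FF (N : ℕ) (s : ℝ) (u v : E N → ℝ) : ℝ :=
  (CNs N s / 2) * ∫ p : E N × E N, kern N s u v p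

lemma sq_sub_le_mul_sub_of_monotone_of_lipschitzWith_one {f : ℝ → ℝ} (hf : Monotone f)
    (hL : LipschitzWith 1 f) (c d : ℝ) : (f c - f d) ^ 2 ≤ (c - d) * (f c - f d) := by
  have hsign : 0 ≤ (c - d) * (f c - f d) := by
    rcases le_total d c with h | h
    · exact mul_nonneg (sub_nonneg.mpr h) (sub_nonneg.mpr (hf h))
    · exact mul_nonneg_of_nonpos_of_nonpos (sub_nonpos.mpr h) (sub_nonpos.mpr (hf h))
  have hlip : |f c - f d| ≤ |c - d| := by
    simpa [Real.dist_eq] using hL.dist_le_mul c d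
  calc (f c - f d) ^ 2 = |f c - f d| * |f c - f d| := by rw [abs_mul_abs_self, sq]
    _ ≤ |c - d| * |f c - f d| := mul_le_mul_of_nonneg_right hlip (abs_nonneg _)
    _ = (c - d) * (f c - f d) := by rw [← abs_mul, abs_of_nonneg hsign]

section Kernel

variable {N : ℕ} {s : ℝ}

lemma kern_neg_left (u v : E N → ℝ) : kern N s (-u) v = -kern N s u v := by
  ext p
  simp only [kern, Pi.neg_apply]
  ring

lemma kern_self_nonneg (u : E N → ℝ) (p : E N × E N) : 0 ≤ kern N s u u p :=
  div_nonneg (mul_self_nonneg _) (Real.rpow_nonneg (norm_nonneg _) _)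

lemma kern_comp_le {f : ℝ → ℝ} (hf : Monotone f) (hL : LipschitzWith 1 f) (u : E N → ℝ)
    (p : E N × E N) : kern N s (f ∘ u) (f ∘ u) p ≤ kern N s u (f ∘ u) p := by
  refine div_le_div_of_nonneg_right ?_ (Real.rpow_nonneg (norm_nonneg _) _)
  simpa only [Function.comp_apply, sq] using
    sq_sub_le_mul_sub_of_monotone_of_lipschitzWith_one hf hL (u p.1) (u p.2)

lemma CNs_pos (hs0 : 0 < s) (hs1 : s < 1) : 0 < CNs N s := by
  have hΓ₁ : 0 < Real.Gamma (((N : ℝ) + 2 * s) / 2) := Real.Gamma_pos_of_pos (by positivity)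
  have hΓ₂ : 0 < Real.Gamma (1 - s) := Real.Gamma_pos_of_pos (by linarith)
  have hπ : 0 < Real.pi ^ ((N : ℝ) / 2) := Real.rpow_pos_of_pos Real.pi_pos _
  have h2 : (0 : ℝ) < 2 ^ (2 * s) := Real.rpow_pos_of_pos two_pos _
  unfold CNs
  positivity

lemma FF_neg_left (u v : E N → ℝ) : FF N s (-u) v = -FF N s u v := by
  simp only [FF, kern_neg_left, Pi.neg_apply, integral_neg, mul_neg]

lemma FF_self_nonneg (hs0 : 0 < s) (hs1 : s < 1) (u : E N → ℝ) : 0 ≤ FF N s u u :=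
  mul_nonneg (by linarith [CNs_pos (N := N) hs0 hs1]) (integral_nonneg (kern_self_nonneg u))

lemma FF_comp_le (hs0 : 0 < s) (hs1 : s < 1) {f : ℝ → ℝ} (hf : Monotone f)
    (hL : LipschitzWith 1 f) {u : E N → ℝ} (hself : Integrable (kern N s (f ∘ u) (f ∘ u)))
    (hmixed : Integrable (kern N s u (f ∘ u))) :
    FF N s (f ∘ u) (f ∘ u) ≤ FF N s u (f ∘ u) :=
  mul_le_mul_of_nonneg_left (integral_mono hself hmixed (kern_comp_le hf hL u))
    (by linarith [CNs_pos (N := N) hs0 hs1])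

end Kernel

theorem neg_part_inequality_full_general (N : ℕ) (s : ℝ) (hs0 : 0 < s) (hs1 : s < 1)
    (φ : E N → ℝ)
    (hint : Integrable (kern N s φ (fun x => max (-φ x) 0)))
    (hint2 : Integrable (kern N s (fun x => max (-φ x) 0) (fun x => max (-φ x) 0))) :
    FF N s (fun x => max (-φ x) 0) (fun x => max (-φ x) 0) ≤
        -FF N s φ (fun x => max (-φ x) 0) ∧
      0 ≤ FF N s (fun x => max (-φ x) 0) (fun x => max (-φ x) 0) := by
  have hmono : Monotone fun t : ℝ => max t 0 := monotone_id.max monotone_const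
  have hlip : LipschitzWith 1 fun t : ℝ => max t 0 := LipschitzWith.id.max_const 0
  have hint_neg : Integrable (kern N s (-φ) (fun x => max (-φ x) 0)) := by
    rw [kern_neg_left]
    exact hint.neg
  refine ⟨?_, FF_self_nonneg hs0 hs1 _⟩
  rw [← FF_neg_left]
  exact FF_comp_le hs0 hs1 hmono hlip (u := -φ) hint2 hint_neg

/-- the key inequality `−F(φ, φ⁻) ≥ F(φ⁻, φ⁻) ≥ 0`. -/
theorem neg_part_inequality_full (N : ℕ) (s : ℝ) (hN : 1 ≤ N) (hs0 : 0 < s) (hs1 : s < 1)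
    (φ : E N → ℝ) (hφ : Measurable φ)
    (hint : Integrable (kern N s φ (fun x => max (-φ x) 0)))
    (hint2 : Integrable (kern N s (fun x => max (-φ x) 0) (fun x => max (-φ x) 0))) :
    FF N s (fun x => max (-φ x) 0) (fun x => max (-φ x) 0) ≤
        -FF N s φ (fun x => max (-φ x) 0) ∧
      0 ≤ FF N s (fun x => max (-φ x) 0) (fun x => max (-φ x) 0) :=
  neg_part_inequality_full_general N s hs0 hs1 φ hint hint2
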